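/- arXiv:1611.04924 — 2 statements merged into one kernel-verified Lean document; each statement's English description precedes it below -/
import Mathlib

section
/- (Lemma 1 of the paper) Let L be a real symmetric block matrix [[L₁₁, L₁₂],[L₁₂ᵀ, L₂₂]] with L₁₁ positive definite, and suppose L/L₁₁ + δI is positive semidefinite for some δ > 0. Set L' = L + δI with blocks L'₁₁ = L₁₁ + δI, L'₂₂ = L₂₂ + δI, L'₁₂ = L₁₂. Then the Schur complement L'/L'₁₁ = L'₂₂ − L₁₂ᵀ (L'₁₁)⁻¹ L₁₂ is positive semidefinite. -/
open Matrix

/-!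
Shifting a positive definite `A` by `δ • 1` can only shrink its inverse:
`A⁻¹ - (A + δ • 1)⁻¹ = δ • ((A + δ • 1) * A)⁻¹`, and `(A + δ • 1) * A = A ^ 2 + δ • A` is positive
semidefinite. So the Schur complement of the shifted matrix is `C - Bᵀ A⁻¹ B + δ • 1` plus the
positive semidefinite congruence `Bᵀ (A⁻¹ - (A + δ • 1)⁻¹) B`.
-/

namespace Matrix.PosDef

open scoped ComplexOrder

variable {n 𝕜 : Type*} [Fintype n] [DecidableEq n] [RCLike 𝕜] {A : Matrix n n 𝕜} {δ : ℝ}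

theorem posSemidef_inv_sub_inv_add_smul_one (hA : A.PosDef) (hδ : 0 ≤ δ) :
    (A⁻¹ - (A + δ • 1)⁻¹).PosSemidef := by
  have hshift : (A + δ • 1).PosDef := hA.add_posSemidef (PosSemidef.one.smul hδ)
  have hgap : A⁻¹ - (A + δ • 1)⁻¹ = δ • ((A + δ • 1) * A)⁻¹ := by
    rw [inv_sub_inv (iff_of_true hA.isUnit hshift.isUnit), add_sub_cancel_left, mul_inv_rev,
      Matrix.mul_smul, mul_one, Matrix.smul_mul]
  have hprod : ((A + δ • 1) * A).PosSemidef := by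
    rw [add_mul, Matrix.smul_mul, one_mul, ← sq]
    exact (hA.posSemidef.pow 2).add (hA.posSemidef.smul hδ)
  rw [hgap]
  exact hprod.inv.smul hδ

end Matrix.PosDef

theorem stmt_12_general (n₁ n₂ : ℕ) (A : Matrix (Fin n₁) (Fin n₁) ℝ)
    (B : Matrix (Fin n₁) (Fin n₂) ℝ) (C : Matrix (Fin n₂) (Fin n₂) ℝ)
    (hA : A.PosDef) (δ : ℝ) (hδ : 0 < δ)
    (hS : (C - Bᵀ * A⁻¹ * B + δ • (1 : Matrix (Fin n₂) (Fin n₂) ℝ)).PosSemidef) :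
    ((C + δ • (1 : Matrix (Fin n₂) (Fin n₂) ℝ)) -
      Bᵀ * (A + δ • (1 : Matrix (Fin n₁) (Fin n₁) ℝ))⁻¹ * B).PosSemidef := by
  have hgap := (hA.posSemidef_inv_sub_inv_add_smul_one hδ.le).conjTranspose_mul_mul_same B
  rw [conjTranspose_eq_transpose_of_trivial] at hgap
  have hsplit : C + δ • 1 - Bᵀ * (A + δ • 1)⁻¹ * B =
      (C - Bᵀ * A⁻¹ * B + δ • 1) + Bᵀ * (A⁻¹ - (A + δ • 1)⁻¹) * B := by
    rw [Matrix.mul_sub, Matrix.sub_mul]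
    abel
  rw [hsplit]
  exact hS.add hgap

theorem stmt_12 (n₁ n₂ : ℕ) (A : Matrix (Fin n₁) (Fin n₁) ℝ)
    (B : Matrix (Fin n₁) (Fin n₂) ℝ) (C : Matrix (Fin n₂) (Fin n₂) ℝ)
    (hA : A.PosDef) (hC : C.IsSymm) (δ : ℝ) (hδ : 0 < δ)
    (hS : (C - Bᵀ * A⁻¹ * B + δ • (1 : Matrix (Fin n₂) (Fin n₂) ℝ)).PosSemidef) :
    ((C + δ • (1 : Matrix (Fin n₂) (Fin n₂) ℝ)) -
      Bᵀ * (A + δ • (1 : Matrix (Fin n₁) (Fin n₁) ℝ))⁻¹ * B).PosSemidef :=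
  stmt_12_general n₁ n₂ A B C hA δ hδ hS
end

section
/- Let L be a real symmetric matrix in block form [[L₁₁, L₁₂],[L₁₂ᵀ, L₂₂]]. Let κ ≤ 0 be strictly less than the smallest eigenvalue of L₁₁ (so 𝓛₁₁ := L₁₁ − κI is positive definite), and let η ≤ 0 be a lower bound on the eigenvalues of the Schur complement 𝓛/𝓛₁₁ of the shifted matrix 𝓛 = L − κI. Then κ + η is a lower bound for the smallest eigenvalue of L; i.e., L − (κ + η)I is positive semidefinite. -/
/-!
Split `L - (κ + η) I = [[A - κ I, B], [Bᴴ, D - (κ + η) I]] + (-η) • diag(I, 0)`. The Schur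
complement of the positive definite block `A - κ I` in the first summand is exactly
`𝓛/𝓛₁₁ - η I`, so the first summand is positive semidefinite by the Schur complement criterion;
the second is positive semidefinite because `η ≤ 0`.
-/

open Matrix

namespace Matrix

open scoped ComplexOrder

variable {m n 𝕜 : Type*} [DecidableEq m] [DecidableEq n] [RCLike 𝕜]

theorem posSemidef_fromBlocks_smul_one_zero {c : ℝ} (hc : 0 ≤ c) :
    (fromBlocks (c • (1 : Matrix m m 𝕜)) 0 0 (0 : Matrix n n 𝕜)).PosSemidef := by
  rw [RCLike.real_smul_eq_coe_smul (K := 𝕜), smul_one_eq_diagonal, ← diagonal_zero (n := n),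
    fromBlocks_diagonal, posSemidef_diagonal_iff]
  rintro (i | i)
  · simpa using hc
  · simp

variable [Fintype m] [Fintype n]

theorem PosDef.posSemidef_fromBlocks_sub_smul_one {A : Matrix m m 𝕜} {κ : ℝ} (B : Matrix m n 𝕜)
    {D : Matrix n n 𝕜} {η : ℝ} (hA : (A - κ • 1).PosDef) (hη : η ≤ 0)
    (hS : (D - κ • 1 - Bᴴ * (A - κ • 1)⁻¹ * B - η • 1).PosSemidef) :
    (fromBlocks A B Bᴴ D - (κ + η) • 1).PosSemidef := by
  have : Invertible (A - κ • 1) := hA.isUnit.invertible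
  have hshift : (fromBlocks (A - κ • 1) B Bᴴ (D - (κ + η) • 1)).PosSemidef := by
    have hschur : D - (κ + η) • 1 - Bᴴ * (A - κ • 1)⁻¹ * B =
        D - κ • 1 - Bᴴ * (A - κ • 1)⁻¹ * B - η • 1 := by
      rw [add_smul]
      abel
    rwa [hA.fromBlocks₁₁, hschur]
  have hsplit : fromBlocks A B Bᴴ D - (κ + η) • 1 =
      fromBlocks (A - κ • 1) B Bᴴ (D - (κ + η) • 1) + fromBlocks ((-η) • 1) 0 0 0 := by
    rw [← fromBlocks_one, fromBlocks_smul, sub_eq_add_neg, fromBlocks_neg, fromBlocks_add,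
      fromBlocks_add]
    congr 1 <;> module
  rw [hsplit]
  exact hshift.add (posSemidef_fromBlocks_smul_one_zero (neg_nonneg.mpr hη))

end Matrix

theorem stmt_14_general (n₁ n₂ : ℕ) (A : Matrix (Fin n₁) (Fin n₁) ℝ)
    (B : Matrix (Fin n₁) (Fin n₂) ℝ) (C : Matrix (Fin n₂) (Fin n₂) ℝ)
    (κ η : ℝ) (hη : η ≤ 0)
    (hApd : (A - κ • (1 : Matrix (Fin n₁) (Fin n₁) ℝ)).PosDef)
    (hS : ((C - κ • (1 : Matrix (Fin n₂) (Fin n₂) ℝ)) -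
        Bᵀ * (A - κ • (1 : Matrix (Fin n₁) (Fin n₁) ℝ))⁻¹ * B -
        η • (1 : Matrix (Fin n₂) (Fin n₂) ℝ)).PosSemidef) :
    (Matrix.fromBlocks A B Bᵀ C -
      (κ + η) • (1 : Matrix (Fin n₁ ⊕ Fin n₂) (Fin n₁ ⊕ Fin n₂) ℝ)).PosSemidef := by
  rw [← conjTranspose_eq_transpose_of_trivial] at hS ⊢
  exact hApd.posSemidef_fromBlocks_sub_smul_one B hη hS

theorem stmt_14 (n₁ n₂ : ℕ) (A : Matrix (Fin n₁) (Fin n₁) ℝ)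
    (B : Matrix (Fin n₁) (Fin n₂) ℝ) (C : Matrix (Fin n₂) (Fin n₂) ℝ)
    (hA : A.IsSymm) (hC : C.IsSymm)
    (κ η : ℝ) (hκ : κ ≤ 0) (hη : η ≤ 0)
    (hApd : (A - κ • (1 : Matrix (Fin n₁) (Fin n₁) ℝ)).PosDef)
    (hS : ((C - κ • (1 : Matrix (Fin n₂) (Fin n₂) ℝ)) -
        Bᵀ * (A - κ • (1 : Matrix (Fin n₁) (Fin n₁) ℝ))⁻¹ * B -
        η • (1 : Matrix (Fin n₂) (Fin n₂) ℝ)).PosSemidef) :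
    (Matrix.fromBlocks A B Bᵀ C -
      (κ + η) • (1 : Matrix (Fin n₁ ⊕ Fin n₂) (Fin n₁ ⊕ Fin n₂) ℝ)).PosSemidef :=
  stmt_14_general n₁ n₂ A B C κ η hη hApd hS
end
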